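/- Let K⁺, K⁻ : ℕ → ℕ → ℝ be nonnegative kernels and K̂ : ℕ → ℕ → ℝ a nonnegative symmetric majorant kernel with K̂(x,y) ≥ max{K⁺(x,y), K⁻(x,y)} for all x, y. Let μ⊕, μ⊖ : ℕ → ℝ be nonnegative finitely supported functions, and for y ≥ 1 set T₊(y) := Σ_{x≥1} K̂(x,y) μ⊕(x) and T₋(y) := Σ_{z≥1} K̂(y,z) μ⊖(z). Define r⁻(x,y,z) := K̂(x,y)·K⁻(y,z)/T₊(y), r⁺(x,y,z) := K̂(y,z)·K⁺(x,y)/T₋(y), K_D⁰ := min{r⁻, r⁺} and Δ_D⁻ := max{r⁻ − r⁺, 0}. Then for all y, z ≥ 1 with T₊(y) > 0, Σ_{x≥1} ( K_D⁰(x,y,z) + Δ_D⁻(x,y,z) ) μ⊕(x) = K⁻(y,z). That is, in the Double Coupling algorithm, a given pair consisting of a ⊙-particle of size y and a ⊖-particle of size z coagulates in the X⁻ system at the correct total rate K⁻(y,z). -/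

import Mathlib

/-!
Since `min a b + max (a - b) 0 = a`, the simultaneous rate and the `X⁻`-only rate add up to
`r⁻(x,y,z) = K̂(x,y) K⁻(y,z) / T₊(y)`. Against `μ⊕` the weights `K̂(x,y) μ⊕(x) / T₊(y)` sum
to one, by the very definition of `T₊(y)`, leaving `K⁻(y,z)`.
-/

theorem min_add_max_sub_zero {α : Type*} [AddCommGroup α] [LinearOrder α] [IsOrderedAddMonoid α]
    (a b : α) :
    min a b + max (a - b) 0 = a := by
  rw [← sub_self b, max_sub_sub_right, ← add_sub_assoc, min_add_max, add_sub_cancel_right]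

theorem finsum_mem_div_finsum_mem_mul {α K : Type*} [Field K] (s : Set α) (w : α → K) (a : K)
    (hw : ∑ᶠ i ∈ s, w i ≠ 0) :
    ∑ᶠ i ∈ s, a / (∑ᶠ j ∈ s, w j) * w i = a := by
  rw [← mul_finsum_mem, div_mul_cancel₀ a hw]

theorem double_coupling_correct_minus_rate_general
    (Kp Km Khat : ℕ → ℕ → ℝ)
    (μp μm : ℕ → ℝ) :
    let Tp : ℕ → ℝ := fun y => ∑ᶠ x ∈ {x : ℕ | 1 ≤ x}, Khat x y * μp x
    let Tm : ℕ → ℝ := fun y => ∑ᶠ z ∈ {z : ℕ | 1 ≤ z}, Khat y z * μm z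
    let rm : ℕ → ℕ → ℕ → ℝ := fun x y z => Khat x y * Km y z / Tp y
    let rp : ℕ → ℕ → ℕ → ℝ := fun x y z => Khat y z * Kp x y / Tm y
    let KD0 : ℕ → ℕ → ℕ → ℝ := fun x y z => min (rm x y z) (rp x y z)
    let ΔDm : ℕ → ℕ → ℕ → ℝ := fun x y z => max (rm x y z - rp x y z) 0
    ∀ y z : ℕ, 1 ≤ y → 1 ≤ z → 0 < Tp y →
      ∑ᶠ x ∈ {x : ℕ | 1 ≤ x}, (KD0 x y z + ΔDm x y z) * μp x = Km y z := by
  intro Tp Tm rm rp KD0 ΔDm y z _ _ hTp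
  have hterm : ∀ x, (KD0 x y z + ΔDm x y z) * μp x = Km y z / Tp y * (Khat x y * μp x) := by
    intro x
    rw [min_add_max_sub_zero]
    ring
  simp_rw [hterm]
  exact finsum_mem_div_finsum_mem_mul _ _ _ hTp.ne'

/-- In the Double Coupling algorithm, a given pair consisting of a ⊙-particle of size `y`
and a ⊖-particle of size `z` coagulates in the `X⁻` system at the correct total rate
`K⁻(y,z)`: summing the simultaneous rate `K_D⁰ = min{r⁻, r⁺}` and the `X⁻`-only rate
`Δ_D⁻ = max{r⁻ − r⁺, 0}` against the ⊕-density gives exactly `K⁻(y,z)`. -/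
theorem double_coupling_correct_minus_rate
    (Kp Km Khat : ℕ → ℕ → ℝ)
    (hKp : ∀ x y, 0 ≤ Kp x y) (hKm : ∀ x y, 0 ≤ Km x y)
    (hKhat : ∀ x y, 0 ≤ Khat x y)
    (hKhatSymm : ∀ x y, Khat x y = Khat y x)
    (hMaj : ∀ x y, max (Kp x y) (Km x y) ≤ Khat x y)
    (μp μm : ℕ → ℝ) (hμp : ∀ x, 0 ≤ μp x) (hμm : ∀ x, 0 ≤ μm x)
    (hμpFin : (Function.support μp).Finite) (hμmFin : (Function.support μm).Finite) :
    let Tp : ℕ → ℝ := fun y => ∑ᶠ x ∈ {x : ℕ | 1 ≤ x}, Khat x y * μp x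
    let Tm : ℕ → ℝ := fun y => ∑ᶠ z ∈ {z : ℕ | 1 ≤ z}, Khat y z * μm z
    let rm : ℕ → ℕ → ℕ → ℝ := fun x y z => Khat x y * Km y z / Tp y
    let rp : ℕ → ℕ → ℕ → ℝ := fun x y z => Khat y z * Kp x y / Tm y
    let KD0 : ℕ → ℕ → ℕ → ℝ := fun x y z => min (rm x y z) (rp x y z)
    let ΔDm : ℕ → ℕ → ℕ → ℝ := fun x y z => max (rm x y z - rp x y z) 0
    ∀ y z : ℕ, 1 ≤ y → 1 ≤ z → 0 < Tp y →
      ∑ᶠ x ∈ {x : ℕ | 1 ≤ x}, (KD0 x y z + ΔDm x y z) * μp x = Km y z :=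
  double_coupling_correct_minus_rate_general Kp Km Khat μp μm
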